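/- Let w₁,…,wₙ ∈ ℝⁿ satisfy ∏ᵢ ‖wᵢ‖₂ ≤ 1, and let W be the matrix with columns wᵢ. Then there exists a unit vector x ∈ ℝⁿ with ‖Wx‖_∞ ≤ √π / (2 · Γ(n/2+1)^{1/n}). -/

import Mathlib

/-!
On `Fin n → ℝ` the norm is the sup norm, so `W⁻¹` maps the cube `‖Wx‖_∞ ≤ r` onto a closed set
`S` of volume `(2r)ⁿ / |det W|`. With `r = √π / (2 Γ(n/2+1)^{1/n})` we have `(2r)ⁿ = vol(B)` for
the open Euclidean unit ball `B`, and Hadamard's inequality gives `|det W| ≤ 1`, so `vol S ≥ vol B`.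
A closed set cannot sit inside an open set of no larger finite measure unless the two coincide,
which connectedness of `ℝⁿ` forbids; hence `S` contains a point `y` with `‖y‖₂ ≥ 1`, and
`y / ‖y‖₂` is the required unit vector. If `det W = 0`, a normalised kernel vector works.
-/

open Matrix Real MeasureTheory Set

theorem Matrix.abs_det_le_prod_sqrt_sum_sq {n : ℕ} (A : Matrix (Fin n) (Fin n) ℝ) :
    |A.det| ≤ ∏ i, √(∑ j, A j i ^ 2) := by
  have : Fact (Module.finrank ℝ (EuclideanSpace ℝ (Fin n)) = n) := ⟨finrank_euclideanSpace_fin⟩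
  let b := EuclideanSpace.basisFun (Fin n) ℝ
  let v : Fin n → EuclideanSpace ℝ (Fin n) := fun i ↦ WithLp.toLp 2 (Aᵀ i)
  have hdet : b.toBasis.det v = A.det := by rw [Module.Basis.det_apply]; rfl
  calc |A.det| = |b.toBasis.orientation.volumeForm v| := by
        rw [Orientation.volumeForm_robust' _ b v, hdet]
    _ ≤ ∏ i, ‖v i‖ := Orientation.abs_volumeForm_apply_le _ v
    _ = ∏ i, √(∑ j, A j i ^ 2) := by simp [v, EuclideanSpace.norm_eq, sq_abs]

theorem not_subset_of_measure_le {X : Type*} [TopologicalSpace X] [PreconnectedSpace X]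
    [MeasurableSpace X] [OpensMeasurableSpace X] {μ : Measure X} [μ.IsOpenPosMeasure]
    {S U : Set X} (hS : IsClosed S) (hU : IsOpen U) (hU₀ : U.Nonempty) (hU_ne : U ≠ univ)
    (hμ : μ U ≤ μ S) (hU_fin : μ U ≠ ⊤) : ¬ S ⊆ U := by
  intro hSU
  have hnull : μ (U \ S) = 0 := (ae_eq_set.1 (ae_eq_of_subset_of_measure_ge hSU hμ
    hS.measurableSet.nullMeasurableSet hU_fin)).2
  have hUS : U = S :=
    (sdiff_eq_empty.1 (((hU.sdiff hS).measure_eq_zero_iff μ).1 hnull)).antisymm hSU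
  exact (isClopen_iff.1 ⟨hUS ▸ hS, hU⟩).elim hU₀.ne_empty hU_ne

theorem exists_norm_eq_one_norm_mulVec_le_of_ne_zero {n : ℕ} (W : Matrix (Fin n) (Fin n) ℝ)
    {r : ℝ} {y : EuclideanSpace ℝ (Fin n)} (hy : y ≠ 0) (hWy : ‖W *ᵥ y.ofLp‖ ≤ r * ‖y‖) :
    ∃ x : EuclideanSpace ℝ (Fin n), ‖x‖ = 1 ∧ ‖W *ᵥ x.ofLp‖ ≤ r := by
  refine ⟨‖y‖⁻¹ • y, norm_smul_inv_norm hy, ?_⟩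
  rw [WithLp.ofLp_smul, mulVec_smul, norm_smul, norm_inv, norm_norm]
  calc ‖y‖⁻¹ * ‖W *ᵥ y.ofLp‖ ≤ ‖y‖⁻¹ * (r * ‖y‖) := by gcongr
    _ = r := by field_simp [norm_ne_zero_iff.2 hy]

theorem exists_norm_eq_one_norm_mulVec_le {n : ℕ} [NeZero n] (W : Matrix (Fin n) (Fin n) ℝ)
    {r : ℝ} (hr : 0 ≤ r)
    (hvol : ENNReal.ofReal |W.det| * volume (Metric.ball (0 : EuclideanSpace ℝ (Fin n)) 1)
      ≤ ENNReal.ofReal ((2 * r) ^ n)) :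
    ∃ x : EuclideanSpace ℝ (Fin n), ‖x‖ = 1 ∧ ‖W *ᵥ x.ofLp‖ ≤ r := by
  by_cases hdet : W.det = 0
  · obtain ⟨y, hy, hWy⟩ := exists_mulVec_eq_zero_iff.2 hdet
    exact exists_norm_eq_one_norm_mulVec_le_of_ne_zero W (y := WithLp.toLp 2 y)
      (by simpa using hy) (by simp [hWy]; positivity)
  let S : Set (EuclideanSpace ℝ (Fin n)) := WithLp.ofLp ⁻¹' (toLin' W ⁻¹' Metric.closedBall 0 r)
  have hW_cont := (toLin' W).continuous_of_finiteDimensional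
  have hS : volume S = ENNReal.ofReal |W.det⁻¹| * ENNReal.ofReal ((2 * r) ^ n) := by
    rw [(PiLp.volume_preserving_ofLp _).measure_preimage
        (measurableSet_closedBall.preimage hW_cont.measurable).nullMeasurableSet,
      Measure.addHaar_preimage_linearMap _ (by rwa [LinearMap.det_toLin']), LinearMap.det_toLin',
      Real.volume_pi_closedBall 0 hr, Fintype.card_fin]
  have hμ : volume (Metric.ball (0 : EuclideanSpace ℝ (Fin n)) 1) ≤ volume S := by
    rw [hS, abs_inv, ENNReal.ofReal_inv_of_pos (abs_pos.2 hdet), ← ENNReal.div_eq_inv_mul,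
      ENNReal.le_div_iff_mul_le (.inl (by simpa using hdet)) (by simp), mul_comm]
    exact hvol
  have hS_closed : IsClosed S :=
    (Metric.isClosed_closedBall.preimage hW_cont).preimage (PiLp.continuous_ofLp 2 _)
  have hball_ne : Metric.ball (0 : EuclideanSpace ℝ (Fin n)) 1 ≠ univ := by
    obtain ⟨v, hv⟩ := exists_norm_eq (EuclideanSpace ℝ (Fin n)) zero_le_one
    exact (ne_univ_iff_exists_notMem _).2 ⟨v, by simp [hv]⟩
  obtain ⟨y, hyS, hyU⟩ := not_subset.1 (not_subset_of_measure_le hS_closed Metric.isOpen_ball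
    ⟨0, by simp⟩ hball_ne hμ measure_ball_lt_top.ne)
  have hy : 1 ≤ ‖y‖ := by simpa using hyU
  refine exists_norm_eq_one_norm_mulVec_le_of_ne_zero W (norm_pos_iff.1 (one_pos.trans_le hy)) ?_
  calc ‖W *ᵥ y.ofLp‖ ≤ r := by simpa [S] using hyS
    _ ≤ r * ‖y‖ := le_mul_of_one_le_right hr hy

/-- Geometric-mean version: if `∏ᵢ ‖wᵢ‖₂ ≤ 1` then some unit vector `x` has
`‖Wx‖_∞ ≤ √π / (2 Γ(n/2+1)^{1/n})`. -/
theorem exists_unit_vector_of_prod_norms_le_one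
    (n : ℕ) (hn : 1 ≤ n) (W : Matrix (Fin n) (Fin n) ℝ)
    (hprod : ∏ i, Real.sqrt (∑ j, W j i ^ 2) ≤ 1) :
    ∃ x : Fin n → ℝ, Real.sqrt (∑ i, x i ^ 2) = 1 ∧
      ‖W.mulVec x‖ ≤ Real.sqrt π / (2 * Real.Gamma ((n : ℝ) / 2 + 1) ^ ((1 : ℝ) / n)) := by
  have : NeZero n := ⟨by omega⟩
  set G := Real.Gamma ((n : ℝ) / 2 + 1)
  have hG : 0 < G := Real.Gamma_pos_of_pos (by positivity)
  set r := √π / (2 * G ^ ((1 : ℝ) / n))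
  have hcube : (2 * r) ^ n = √π ^ n / G := by
    rw [show 2 * r = √π / G ^ ((1 : ℝ) / n) by simp only [r]; field_simp, div_pow, one_div,
      Real.rpow_inv_natCast_pow hG.le (NeZero.ne n)]
  have hdet : |W.det| ≤ 1 := W.abs_det_le_prod_sqrt_sum_sq.trans hprod
  obtain ⟨x, hx, hWx⟩ := exists_norm_eq_one_norm_mulVec_le W (r := r) (by positivity) <| by
    rw [EuclideanSpace.volume_ball, Fintype.card_fin, ENNReal.ofReal_one, one_pow, one_mul, hcube]
    exact mul_le_of_le_one_left zero_le (ENNReal.ofReal_le_one.2 hdet)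
  exact ⟨x.ofLp, by simpa [EuclideanSpace.norm_eq, sq_abs] using hx, hWx⟩
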